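/- arXiv:2104.13550 — 2 statements merged into one kernel-verified Lean document; each statement's English description precedes it below -/
import Mathlib

section
/- (Exact nullspace columns of the barrier system.) Let S be the reaction–diffusion stoichiometry matrix with barrier built from n₁, n₂ ≥ 1 (n = n₁+n₂), b₁, b₂ ∈ {0,1}, any γ ∈ ℝ, m × p₁ and m × p₂ matrices S_{r₁}, S_{r₂}, and a subset M₊ ⊆ {1,…,m}. Let (Û_{d₁}, Σ̂_{d₁}, V̂_{d₁}, Ŭ_{d₁}, V̆_{d₁}) be an SVD of rank q_{d₁} of S_{d₁} = S_d(n₁; b₁, 0), and suppose S_{r₁} = U_{r₁} Σ_{r₁} V_{r₁}ᵀ where U_{r₁} (m × m) and V_{r₁} (p₁ × p₁) are orthogonal. Define the (n₁p₁ + n₂p₂ + (n+1)m) × (q_{d₁} p₁) matrix N = [ Û_{d₁}Σ̂_{d₁} ⊗ V_{r₁} ; 0 ; ([−γ V̂_{d₁}; 0_{n₂ × q_{d₁}}]) ⊗ (U_{r₁}Σ_{r₁}) ], where the middle zero block has n₂p₂ rows. Then S · N = 0 and the columns of N are linearly independent; i.e., the columns of N span a q_{d₁}p₁-dimensional subspace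 of the nullspace of S, for every γ ∈ ℝ. -/
/-!
Since the last column of `S_d(n₁; b₁, 0)` vanishes and `Σ̂_{d₁}` is invertible, the identity
`Û_{d₁}ᵀ S_{d₁} = Σ̂_{d₁} V̂_{d₁}ᵀ` forces the last row of `V̂_{d₁}` to vanish. The stacked block
`[−γ V̂_{d₁}; 0]` therefore only meets columns `< n₁` of `S_d(n)` and misses the single nonzero
column of `H`; on those columns `S_d(n)` is `S_{d₁}` in its first `n₁` rows and zero below.
So the diffusion columns contribute `−γ [Û_{d₁}Σ̂_{d₁}; 0] ⊗ U_{r₁}Σ_{r₁}`, while the reaction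
columns contribute `γ [Û_{d₁}Σ̂_{d₁}; 0] ⊗ S_{r₁}V_{r₁}`, which is the same matrix up to sign.
The columns of `N` are independent because its top block `Û_{d₁}Σ̂_{d₁} ⊗ V_{r₁}` has the left
inverse `Σ̂_{d₁}⁻¹Û_{d₁}ᵀ ⊗ V_{r₁}ᵀ`.
-/

open Matrix
open scoped Kronecker Matrix

noncomputable section

/-- The diffusion-only stoichiometry matrix `S_d(n; b₁, b₂)`. -/
def Sd (n : ℕ) (b₁ b₂ : ℝ) : Matrix (Fin n) (Fin (n+1)) ℝ :=
  Matrix.of fun i j =>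
    if (j : ℕ) = (i : ℕ) ∧ (i : ℕ) = 0 then b₁
    else if (j : ℕ) = (i : ℕ) then 1
    else if (j : ℕ) = (i : ℕ) + 1 ∧ (i : ℕ) = n - 1 then -b₂
    else if (j : ℕ) = (i : ℕ) + 1 then (-1 : ℝ)
    else 0

namespace Matrix

variable {R ι ι₁ ι₂ κ ν ρ m m₁ m₂ n p p₁ p₂ q : Type*}

lemma transpose_mul_self_eq_one_of_fromCols [Fintype ι] [CommSemiring R]
    [DecidableEq κ] [DecidableEq ν] {A : Matrix ι κ R} {B : Matrix ι ν R}
    (h : (fromCols A B)ᵀ * fromCols A B = 1) : Aᵀ * A = 1 := by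
  rw [transpose_fromCols, fromRows_mul_fromCols, ← fromBlocks_one] at h
  exact (fromBlocks_inj.mp h).1

lemma row_eq_zero_of_eq_mul_diagonal_mul_transpose [Fintype ι] [Fintype ρ] [DecidableEq ρ]
    [CommSemiring R] [NoZeroDivisors R] {S : Matrix ι κ R} {U : Matrix ι ρ R} {σ : ρ → R}
    {V : Matrix κ ρ R} (hU : Uᵀ * U = 1) (hσ : ∀ r, σ r ≠ 0) (hS : S = U * diagonal σ * Vᵀ)
    {j : κ} (hj : ∀ i, S i j = 0) (r : ρ) : V j r = 0 := by
  have hUS : (Uᵀ * S) r j = σ r * V j r := by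
    rw [hS, ← Matrix.mul_assoc, ← Matrix.mul_assoc, hU, Matrix.one_mul, diagonal_mul,
      transpose_apply]
  have hUS' : (Uᵀ * S) r j = 0 := by simp [mul_apply, hj]
  exact (mul_eq_zero.mp (hUS.symm.trans hUS')).resolve_left (hσ r)

lemma mul_eq_mul_of_eq_of_ne_of_row_eq_zero [Fintype κ] [NonUnitalNonAssocSemiring R]
    {A B : Matrix ι κ R} {V : Matrix κ ν R} {j₀ : κ} (hV : ∀ q, V j₀ q = 0)
    (hAB : ∀ i j, j ≠ j₀ → A i j = B i j) : A * V = B * V := by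
  ext i q
  simp only [mul_apply]
  refine Finset.sum_congr rfl fun j _ => ?_
  by_cases hj : j = j₀
  · simp [hj, hV]
  · rw [hAB i j hj]

lemma mul_submatrix_fromRows_zero [Fintype κ] [Fintype m₁] [Fintype m₂]
    [NonUnitalNonAssocSemiring R] (T : Matrix ι κ R) (e : κ ≃ m₁ ⊕ m₂) (X : Matrix m₁ ν R) :
    T * (fromRows X 0).submatrix e id = T.submatrix id (e.symm ∘ Sum.inl) * X := by
  ext i r
  simp [mul_apply, ← e.symm.sum_comp, Fintype.sum_sum_type]

lemma fromRows_kronecker [Mul R] (A : Matrix m₁ n R) (B : Matrix m₂ n R) (C : Matrix p q R) :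
    fromRows A B ⊗ₖ C
      = (fromRows (A ⊗ₖ C) (B ⊗ₖ C)).submatrix (Equiv.sumProdDistrib _ _ _) id := by
  ext ⟨i | i, k⟩ ⟨j, l⟩ <;> rfl

lemma linearIndependent_col_of_mul_eq_one [Fintype ι] [Fintype κ] [DecidableEq κ] [CommRing R]
    {L : Matrix κ ι R} {M : Matrix ι κ R} (h : L * M = 1) : LinearIndependent R M.col := by
  rw [← mulVec_injective_iff]
  intro x y hxy
  simpa [mulVec_mulVec, h] using congrArg (L *ᵥ ·) hxy

lemma linearIndependent_col_fromRows_of_left [Fintype n] [CommRing R] {A : Matrix m₁ n R}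
    (B : Matrix m₂ n R) (hA : LinearIndependent R A.col) :
    LinearIndependent R (fromRows A B).col := by
  rw [← mulVec_injective_iff] at hA ⊢
  intro x y hxy
  apply hA
  simpa [fromRows_mulVec] using congrArg (· ∘ Sum.inl) hxy

lemma kronecker_add_sub_kronecker_mul_kronecker [Fintype κ] [Fintype m₁] [DecidableEq m₁]
    [CommRing R] {T H : Matrix ι κ R} {X : Matrix κ ν R} {Dp Dm : Matrix m₁ m₁ R}
    {W : Matrix m₁ p R} (hH : H * X = 0) (hD : Dp + Dm = 1) :
    (T ⊗ₖ Dp + (T - H) ⊗ₖ Dm) * (X ⊗ₖ W) = (T * X) ⊗ₖ W := by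
  rw [Matrix.add_mul, ← mul_kronecker_mul, ← mul_kronecker_mul, Matrix.sub_mul, hH, sub_zero,
    ← kronecker_add, ← Matrix.add_mul, hD, Matrix.one_mul]

lemma inv_diagonal_mul_transpose_mul_mul_diagonal [Fintype ι] [Fintype ρ] [DecidableEq ρ]
    [Field R] {U : Matrix ι ρ R} {σ : ρ → R} (hU : Uᵀ * U = 1) (hσ : ∀ r, σ r ≠ 0) :
    (diagonal σ⁻¹ * Uᵀ) * (U * diagonal σ) = 1 := by
  rw [Matrix.mul_assoc, ← Matrix.mul_assoc Uᵀ, hU, Matrix.one_mul, diagonal_mul_diagonal,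
    ← diagonal_one]
  exact congrArg diagonal (funext fun r => inv_mul_cancel₀ (hσ r))

lemma submatrix_fromBlocks_one_kronecker_mul_fromRows [Fintype ι₁] [Fintype ι₂]
    [Fintype p₁] [Fintype p₂] [DecidableEq ι₁] [DecidableEq ι₂] [CommSemiring R]
    (eR : ι ≃ ι₁ ⊕ ι₂) (S₁ : Matrix m p₁ R) (S₂ : Matrix m p₂ R) (A : Matrix ι₁ κ R)
    (V : Matrix p₁ q R) :
    (fromBlocks ((1 : Matrix ι₁ ι₁ R) ⊗ₖ S₁) 0 0 ((1 : Matrix ι₂ ι₂ R) ⊗ₖ S₂)).submatrix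
        ((Equiv.prodCongr eR (Equiv.refl m)).trans (Equiv.sumProdDistrib ι₁ ι₂ m)) id
      * fromRows (A ⊗ₖ V) (0 : Matrix (ι₂ × p₂) (κ × q) R)
      = (fromRows A 0).submatrix eR id ⊗ₖ (S₁ * V) := by
  rw [← submatrix_id_id (fromRows _ _), ← submatrix_mul _ _ _ _ _ Function.bijective_id,
    fromBlocks_mul_fromRows, ← mul_kronecker_mul, Matrix.one_mul, kroneckerMap_submatrix_left,
    fromRows_kronecker]
  simp only [Matrix.mul_zero, Matrix.zero_mul, add_zero, zero_kronecker]
  rfl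

end Matrix

def finAddAddOneEquiv (n₁ n₂ : ℕ) : Fin (n₁ + n₂ + 1) ≃ Fin (n₁ + 1) ⊕ Fin n₂ :=
  (finCongr (Nat.add_right_comm n₁ n₂ 1)).trans finSumFinEquiv.symm

@[simp]
lemma finAddAddOneEquiv_symm_inl (n₁ n₂ : ℕ) (j : Fin (n₁ + 1)) :
    (finAddAddOneEquiv n₁ n₂).symm (Sum.inl j) = Fin.castLE (by omega) j :=
  rfl

lemma mul_submatrix_fromRows_eq_zero_of_forall_lt {R ι : Type*} [NonUnitalNonAssocSemiring R]
    (n₁ n₂ : ℕ) {q : ℕ} {T : Matrix ι (Fin (n₁ + n₂ + 1)) R}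
    (hT : ∀ i (j : Fin (n₁ + n₂ + 1)), (j : ℕ) < n₁ → T i j = 0)
    {V : Matrix (Fin (n₁ + 1)) (Fin q) R} (hV : ∀ r, V (Fin.last n₁) r = 0) :
    T * (fromRows V (0 : Matrix (Fin n₂) (Fin q) R)).submatrix
        (finAddAddOneEquiv n₁ n₂) id = 0 := by
  rw [mul_submatrix_fromRows_zero, ← Matrix.zero_mul V]
  refine mul_eq_mul_of_eq_of_ne_of_row_eq_zero hV fun i j hj => hT _ _ ?_
  simpa using Fin.val_lt_last hj

lemma Sd_apply_last_eq_zero (n : ℕ) (b₁ : ℝ) (i : Fin n) : Sd n b₁ 0 i (Fin.last n) = 0 := by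
  have := i.isLt
  simp only [Sd, of_apply, Fin.val_last]
  split_ifs <;> first | rfl | omega | simp

lemma Sd_add_apply_castLE (n₁ n₂ : ℕ) (b₁ b₂ : ℝ) (i : Fin (n₁ + n₂)) {j : Fin (n₁ + 1)}
    (hj : j ≠ Fin.last n₁) :
    Sd (n₁ + n₂) b₁ b₂ i (Fin.castLE (by omega) j)
      = fromRows (Sd n₁ b₁ 0) 0 (finSumFinEquiv.symm i) j := by
  have hj' : (j : ℕ) < n₁ := by simpa using Fin.val_lt_last hj
  refine Fin.addCases (fun i => ?_) (fun i => ?_) i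
  · have := i.isLt
    simp only [finSumFinEquiv_symm_apply_castAdd, fromRows_apply_inl, Sd, of_apply,
      Fin.val_castLE, Fin.val_castAdd]
    split_ifs <;> first | rfl | omega
  · simp only [finSumFinEquiv_symm_apply_natAdd, fromRows_apply_inr, Sd, of_apply,
      Fin.val_castLE, Fin.val_natAdd, Matrix.zero_apply]
    split_ifs <;> first | rfl | omega

lemma Sd_add_mul_submatrix_fromRows (n₁ n₂ : ℕ) {q : ℕ} (b₁ b₂ : ℝ)
    {V : Matrix (Fin (n₁ + 1)) (Fin q) ℝ} (hV : ∀ r, V (Fin.last n₁) r = 0) :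
    Sd (n₁ + n₂) b₁ b₂ * (fromRows V (0 : Matrix (Fin n₂) (Fin q) ℝ)).submatrix
        (finAddAddOneEquiv n₁ n₂) id
      = (fromRows (Sd n₁ b₁ 0 * V) 0).submatrix finSumFinEquiv.symm id := by
  rw [mul_submatrix_fromRows_zero]
  refine (mul_eq_mul_of_eq_of_ne_of_row_eq_zero hV
    fun i j hj => Sd_add_apply_castLE n₁ n₂ b₁ b₂ i hj).trans ?_
  rw [← Matrix.zero_mul V, ← fromRows_mul]
  exact (submatrix_mul _ V _ id id Function.bijective_id).symm

/-- exact nullspace columns of the barrier system, for every `γ`. -/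
theorem stmt18 (n₁ n₂ m p₁ p₂ : ℕ) (b₁ b₂ : ℝ)
    (γ : ℝ)
    (Sr1 : Matrix (Fin m) (Fin p₁) ℝ) (Sr2 : Matrix (Fin m) (Fin p₂) ℝ)
    (Mp : Finset (Fin m))
    -- SVD of `S_{d₁} = S_d(n₁; b₁, 0)` of rank `q_{d₁}`
    (qd1 : ℕ) (Uhd1 : Matrix (Fin n₁) (Fin qd1) ℝ) (σd1 : Fin qd1 → ℝ)
    (Vhd1 : Matrix (Fin (n₁ + 1)) (Fin qd1) ℝ)
    (Ucd1 : Matrix (Fin n₁) (Fin (n₁ - qd1)) ℝ)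
    (Vcd1 : Matrix (Fin (n₁ + 1)) (Fin (n₁ + 1 - qd1)) ℝ)
    (hσd1 : ∀ i, 0 < σd1 i)
    (hUd1 : (fromCols Uhd1 Ucd1)ᵀ * fromCols Uhd1 Ucd1 = 1 ∧
            fromCols Uhd1 Ucd1 * (fromCols Uhd1 Ucd1)ᵀ = 1)
    (hVd1 : (fromCols Vhd1 Vcd1)ᵀ * fromCols Vhd1 Vcd1 = 1 ∧
            fromCols Vhd1 Vcd1 * (fromCols Vhd1 Vcd1)ᵀ = 1)
    (hSd1 : Sd n₁ b₁ 0 = Uhd1 * Matrix.diagonal σd1 * Vhd1ᵀ)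
    -- full orthogonal factorization `S_{r₁} = U_{r₁} Σ_{r₁} V_{r₁}ᵀ`
    (Ur1 : Matrix (Fin m) (Fin m) ℝ) (Sigr1 : Matrix (Fin m) (Fin p₁) ℝ)
    (Vr1 : Matrix (Fin p₁) (Fin p₁) ℝ)
    (hVr1 : Vr1ᵀ * Vr1 = 1)
    (hSr1 : Sr1 = Ur1 * Sigr1 * Vr1ᵀ) :
    let n : ℕ := n₁ + n₂
    let Dp : Matrix (Fin m) (Fin m) ℝ := Matrix.diagonal fun i => if i ∈ Mp then 1 else 0
    let Dm : Matrix (Fin m) (Fin m) ℝ := Matrix.diagonal fun i => if i ∈ Mp then 0 else 1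
    let H : Matrix (Fin n) (Fin (n + 1)) ℝ :=
      Matrix.of fun i j =>
        if (i : ℕ) = n₁ - 1 ∧ (j : ℕ) = n₁ then -1
        else if (i : ℕ) = n₁ ∧ (j : ℕ) = n₁ then 1
        else 0
    let e : Fin n × Fin m ≃ (Fin n₁ × Fin m) ⊕ (Fin n₂ × Fin m) :=
      (Equiv.prodCongr finSumFinEquiv.symm (Equiv.refl (Fin m))).trans
        (Equiv.sumProdDistrib (Fin n₁) (Fin n₂) (Fin m))
    let Sreac : Matrix (Fin n × Fin m) ((Fin n₁ × Fin p₁) ⊕ (Fin n₂ × Fin p₂)) ℝ :=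
      (fromBlocks ((1 : Matrix (Fin n₁) (Fin n₁) ℝ) ⊗ₖ Sr1) 0 0
          ((1 : Matrix (Fin n₂) (Fin n₂) ℝ) ⊗ₖ Sr2)).submatrix e id
    let S : Matrix (Fin n × Fin m)
        (((Fin n₁ × Fin p₁) ⊕ (Fin n₂ × Fin p₂)) ⊕ (Fin (n + 1) × Fin m)) ℝ :=
      fromCols (γ • Sreac) (Sd n b₁ b₂ ⊗ₖ Dp + (Sd n b₁ b₂ - H) ⊗ₖ Dm)
    -- the stacked matrix `[−γ V̂_{d₁}; 0]`, reindexed to `Fin (n+1)` rows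
    let stk : Matrix (Fin (n + 1)) (Fin qd1) ℝ :=
      (fromRows ((-γ) • Vhd1) (0 : Matrix (Fin n₂) (Fin qd1) ℝ)).submatrix
        (fun i : Fin (n + 1) =>
          finSumFinEquiv.symm (finCongr (by omega : n₁ + n₂ + 1 = (n₁ + 1) + n₂) i)) id
    let N : Matrix (((Fin n₁ × Fin p₁) ⊕ (Fin n₂ × Fin p₂)) ⊕ (Fin (n + 1) × Fin m))
        (Fin qd1 × Fin p₁) ℝ :=
      fromRows
        (fromRows ((Uhd1 * Matrix.diagonal σd1) ⊗ₖ Vr1)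
          (0 : Matrix (Fin n₂ × Fin p₂) (Fin qd1 × Fin p₁) ℝ))
        (stk ⊗ₖ (Ur1 * Sigr1))
    S * N = 0 ∧
      LinearIndependent ℝ (fun j : Fin qd1 × Fin p₁ => fun i => N i j) := by
  intro n Dp Dm H e Sreac S stk N
  have hUh : Uhd1ᵀ * Uhd1 = 1 := transpose_mul_self_eq_one_of_fromCols hUd1.1
  have hVh : Vhd1ᵀ * Vhd1 = 1 := transpose_mul_self_eq_one_of_fromCols hVd1.1
  have hVlast : ∀ r, ((-γ) • Vhd1) (Fin.last n₁) r = 0 := fun r => by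
    simp [row_eq_zero_of_eq_mul_diagonal_mul_transpose hUh (fun r => (hσd1 r).ne') hSd1
      (Sd_apply_last_eq_zero n₁ b₁) r]
  have hstk : stk = (fromRows ((-γ) • Vhd1) 0).submatrix (finAddAddOneEquiv n₁ n₂) id := rfl
  have hH : H * stk = 0 :=
    mul_submatrix_fromRows_eq_zero_of_forall_lt n₁ n₂ (fun i j hj => by simp [H, hj.ne]) hVlast
  have hD : Dp + Dm = 1 := by
    rw [diagonal_add, ← diagonal_one]
    congr 1; ext i; split_ifs <;> norm_num
  have hSrV : Sr1 * Vr1 = Ur1 * Sigr1 := by rw [hSr1, Matrix.mul_assoc, hVr1, Matrix.mul_one]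
  have hSdV : Sd n₁ b₁ 0 * Vhd1 = Uhd1 * diagonal σd1 := by
    rw [hSd1, Matrix.mul_assoc, hVh, Matrix.mul_one]
  refine ⟨?_, ?_⟩
  · simp only [S, N, Sreac, e]
    rw [fromCols_mul_fromRows, Matrix.smul_mul, kronecker_add_sub_kronecker_mul_kronecker hH hD,
      submatrix_fromBlocks_one_kronecker_mul_fromRows, hSrV, hstk,
      Sd_add_mul_submatrix_fromRows n₁ n₂ b₁ b₂ hVlast, Matrix.mul_smul, hSdV]
    ext ⟨i, k⟩ ⟨a, l⟩
    refine Fin.addCases (fun i => ?_) (fun i => ?_) i <;> simp [mul_assoc]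
  · have hinv : (diagonal σd1⁻¹ * Uhd1ᵀ) ⊗ₖ Vr1ᵀ * (Uhd1 * diagonal σd1) ⊗ₖ Vr1 = 1 := by
      rw [← mul_kronecker_mul, inv_diagonal_mul_transpose_mul_mul_diagonal hUh
        (fun r => (hσd1 r).ne'), hVr1, one_kronecker_one]
    exact linearIndependent_col_fromRows_of_left _
      (linearIndependent_col_fromRows_of_left _ (linearIndependent_col_of_mul_eq_one hinv))
end
end

section
/- Let n₁, n₂ ≥ 1, n = n₁ + n₂, C₁ = √(n₁/n), C₂ = √(n₂/n). Let [Û_d, ŭ] be an orthogonal n × n matrix whose last column is the constant unit vector ŭ with every entry equal to 1/√n (so Û_d is n × (n−1)). Write Û_{d,s₁} for the matrix of the first n₁ rows of Û_d and Û_{d,s₂} for the matrix of the last n₂ rows, and similarly write ŭ_{s₁} ∈ ℝ^{n₁} and ŭ_{s₂} ∈ ℝ^{n₂} for the corresponding parts of ŭ. Then Û_{d,s₁} Û_dᵀ · [(1/C₁)·ŭ_{s₁}; −(1/C₂)·ŭ_{s₂}] = (1/C₁)·((n₂ + √(n₁n₂))/n)·ŭ_{s₁}, and Û_{d,s₂}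 Û_dᵀ · [(1/C₁)·ŭ_{s₁}; −(1/C₂)·ŭ_{s₂}] = −(1/C₂)·((n₁ + √(n₁n₂))/n)·ŭ_{s₂}. -/
open Matrix
open scoped Matrix

/-!
Since `[Û_d, ŭ]` is square, `QᵀQ = 1` forces `QQᵀ = 1`, i.e. `Û_d Û_dᵀ = 1 - ŭŭᵀ`. With `ŭ` constant,
`ŭŭᵀ v` is the constant vector `(∑ v) / n`, so each entry of `Û_d Û_dᵀ v` is the corresponding
entry of `v` minus the mean of `v`. For the given `v` the entries are `1/√n₁` and `-1/√n₂`, whose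
sum is `√n₁ - √n₂`; the two identities are then elementary algebra with square roots.
-/

namespace Matrix

variable {R l m n : Type*}

theorem mul_transpose_add_mul_transpose_eq_one_of_fromCols [CommRing R] {o : Type*}
    [Fintype m] [Fintype n] [Fintype o] [DecidableEq m] [DecidableEq n] [DecidableEq o]
    (e : m ≃ n ⊕ o) (U : Matrix m n R) (u : Matrix m o R)
    (h : (fromCols U u)ᵀ * fromCols U u = 1) : U * Uᵀ + u * uᵀ = 1 := by
  rwa [transpose_fromCols, ← fromCols_mul_fromRows_eq_one_comm e, fromCols_mul_fromRows] at h

theorem const_col_mul_transpose_mulVec [CommRing R] [Fintype m] (c : R) (v : m → R) :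
    ((of fun (_ : m) (_ : Fin 1) => c) * (of fun (_ : m) (_ : Fin 1) => c)ᵀ) *ᵥ v =
      fun _ => c ^ 2 * ∑ j, v j := by
  ext i
  simp [mulVec, dotProduct, mul_apply, Finset.mul_sum, sq, mul_assoc]

theorem mul_transpose_mulVec_of_fromCols_const [CommRing R]
    [Fintype m] [Fintype n] [DecidableEq m] [DecidableEq n]
    (e : m ≃ n ⊕ Fin 1) (U : Matrix m n R) (c : R)
    (h : (fromCols U (of fun (_ : m) (_ : Fin 1) => c))ᵀ *
      fromCols U (of fun (_ : m) (_ : Fin 1) => c) = 1) (v : m → R) :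
    (U * Uᵀ) *ᵥ v = v - fun _ => c ^ 2 * ∑ j, v j := by
  have hI := mul_transpose_add_mul_transpose_eq_one_of_fromCols e U _ h
  rw [← const_col_mul_transpose_mulVec, eq_sub_of_add_eq hI, sub_mulVec, one_mulVec]

theorem submatrix_id_mul_mulVec [NonUnitalNonAssocSemiring R] {p : Type*} [Fintype n] [Fintype p]
    (M : Matrix m n R) (N : Matrix n p R) (f : l → m) (v : p → R) :
    (M.submatrix f id * N) *ᵥ v = ((M * N) *ᵥ v) ∘ f := by
  rw [← submatrix_id_id N, ← submatrix_mul _ _ _ _ _ Function.bijective_id, submatrix_id_id,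
    ← Equiv.coe_refl, submatrix_mulVec_equiv]
  rfl

end Matrix

namespace Real

theorem one_div_sqrt_div_mul_one_div_sqrt (a : ℝ) {s : ℝ} (hs : 0 < s) :
    1 / √(a / s) * (1 / √s) = 1 / √a := by
  rw [sqrt_div' a hs.le]
  field_simp [(sqrt_pos.mpr hs).ne']

theorem one_div_sqrt_sub_div_add {p q : ℝ} (hp : 0 < p) (hq : 0 ≤ q) :
    1 / √p - 1 / (p + q) * (√p - √q) = 1 / √p * ((q + √(p * q)) / (p + q)) := by
  have hsp : 0 < √p := sqrt_pos.mpr hp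
  rw [sqrt_mul hp.le]
  field_simp
  rw [mul_sub, mul_self_sqrt hp.le]
  ring

end Real

/-- key computation for the asymptotic nullspace basis. `[Û_d, ŭ]` is an
orthogonal `n × n` matrix whose last column `ŭ` is the constant unit vector with entries
`1/√n`, where `n = n₁ + n₂`. -/
theorem stmt19 (n₁ n₂ : ℕ) (h₁ : 1 ≤ n₁) (h₂ : 1 ≤ n₂)
    (Uhd : Matrix (Fin (n₁ + n₂)) (Fin (n₁ + n₂ - 1)) ℝ)
    (horth :
      (fromCols Uhd (Matrix.of fun (_ : Fin (n₁ + n₂)) (_ : Fin 1) =>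
          1 / Real.sqrt ((n₁ : ℝ) + n₂)))ᵀ *
        fromCols Uhd (Matrix.of fun (_ : Fin (n₁ + n₂)) (_ : Fin 1) =>
          1 / Real.sqrt ((n₁ : ℝ) + n₂)) = 1) :
    let C₁ : ℝ := Real.sqrt ((n₁ : ℝ) / ((n₁ : ℝ) + n₂))
    let C₂ : ℝ := Real.sqrt ((n₂ : ℝ) / ((n₁ : ℝ) + n₂))
    -- the vector `[(1/C₁)·ŭ_{s₁}; −(1/C₂)·ŭ_{s₂}]`
    let v : Fin (n₁ + n₂) → ℝ := fun i =>
      if (i : ℕ) < n₁ then (1 / C₁) * (1 / Real.sqrt ((n₁ : ℝ) + n₂))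
      else -((1 / C₂) * (1 / Real.sqrt ((n₁ : ℝ) + n₂)))
    -- first identity (rows `s₁`, i.e. the first `n₁` rows of `Û_d`)
    ((Uhd.submatrix (Fin.castAdd n₂) id * Uhdᵀ) *ᵥ v =
      fun _ : Fin n₁ =>
        (1 / C₁) * (((n₂ : ℝ) + Real.sqrt ((n₁ : ℝ) * n₂)) / ((n₁ : ℝ) + n₂)) *
          (1 / Real.sqrt ((n₁ : ℝ) + n₂))) ∧
    -- second identity (rows `s₂`, i.e. the last `n₂` rows of `Û_d`)
    ((Uhd.submatrix (Fin.natAdd n₁) id * Uhdᵀ) *ᵥ v =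
      fun _ : Fin n₂ =>
        -((1 / C₂) * (((n₁ : ℝ) + Real.sqrt ((n₁ : ℝ) * n₂)) / ((n₁ : ℝ) + n₂)) *
          (1 / Real.sqrt ((n₁ : ℝ) + n₂)))) := by
  intro C₁ C₂ v
  have hn₁ : (0 : ℝ) < n₁ := by exact_mod_cast h₁
  have hn₂ : (0 : ℝ) < n₂ := by exact_mod_cast h₂
  have hn : (0 : ℝ) < n₁ + n₂ := by positivity
  have e : Fin (n₁ + n₂) ≃ Fin (n₁ + n₂ - 1) ⊕ Fin 1 :=
    (finCongr (by omega)).trans finSumFinEquiv.symm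
  have hproj := mul_transpose_mulVec_of_fromCols_const e Uhd _ horth v
  have hc : (1 / Real.sqrt ((n₁ : ℝ) + n₂)) ^ 2 = 1 / ((n₁ : ℝ) + n₂) := by
    rw [div_pow, one_pow, Real.sq_sqrt hn.le]
  have hv₁ (i : Fin n₁) : v (Fin.castAdd n₂ i) = 1 / Real.sqrt n₁ := by
    simp only [v, C₁, Fin.val_castAdd, i.isLt, if_true]
    exact Real.one_div_sqrt_div_mul_one_div_sqrt _ hn
  have hv₂ (i : Fin n₂) : v (Fin.natAdd n₁ i) = -(1 / Real.sqrt n₂) := by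
    simp only [v, C₂, Fin.val_natAdd, Nat.not_lt.mpr (Nat.le_add_right n₁ i), if_false]
    rw [Real.one_div_sqrt_div_mul_one_div_sqrt _ hn]
  have hsum : ∑ j, v j = Real.sqrt n₁ - Real.sqrt n₂ := by
    simp only [Fin.sum_univ_add, hv₁, hv₂, Finset.sum_const, Finset.card_univ, Fintype.card_fin,
      nsmul_eq_mul, mul_neg, mul_one_div, Real.div_sqrt, sub_eq_add_neg]
  refine ⟨funext fun i => ?_, funext fun i => ?_⟩
  · rw [submatrix_id_mul_mulVec, Function.comp_apply, hproj, Pi.sub_apply, hv₁, hsum, hc,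
      mul_right_comm, Real.one_div_sqrt_div_mul_one_div_sqrt _ hn]
    exact Real.one_div_sqrt_sub_div_add hn₁ hn₂.le
  · have hswap := Real.one_div_sqrt_sub_div_add hn₂ hn₁.le
    rw [add_comm (n₂ : ℝ), mul_comm (n₂ : ℝ)] at hswap
    rw [submatrix_id_mul_mulVec, Function.comp_apply, hproj, Pi.sub_apply, hv₂, hsum, hc,
      mul_right_comm, Real.one_div_sqrt_div_mul_one_div_sqrt _ hn]
    linarith
end
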